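/- Let G be a countable group with an exhaustion (E_n)_{n≥0} by finite subsets (E_0 = ∅, E_n ⊆ E_{n+1}, ⋃_n E_n = G), and let d be the associated standard metric on A^G: d(x,y) = 2^{-n} where n = sup{k ∈ ℕ : x|_{E_k} = y|_{E_k}} (with d(x,y) = 0 if x = y). Let A be a finite-dimensional vector space over a field k and let τ_1, …, τ_r : A^G → A^G be pairwise commuting linear NUCA with finite memory; for α = (a_1,…,a_r) ∈ ℕ^r write τ_α = τ_1^{a_1} ∘ ⋯ ∘ τ_r^{a_r}. Then for every ε > 0 there exists δ > 0 such that for every family (x_α)_{α∈ℕ^r} of elements of A^G satisfying d(τ_i(x_α), x_{α+e_i}) < δ for all i ∈ {1,…,r} and all α ∈ ℕ^r (where e_i is the i-th standard basis vector of ℕ^r), there exists x ∈ A^G with d(τ_α(x), x_α) < ε for every α ∈ ℕ^r. In other words, the natural action of the abelian monoid generated by τ_1, …, τ_r on A^G has the shadowing property with respect to d. -/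

import Mathlib

open scoped BigOperators

/-- The linear NUCA `σ_s : A^G → A^G` with memory `M ⊆ G` associated with the
configuration of local defining maps `s`, given in coefficient form:
`σ_s(x)(g) = ∑_{m ∈ M} s(g,m)(x(g·m))`. -/
def nucaMap {k A G : Type*} [Field k] [AddCommGroup A] [Module k A] [Group G]
    (M : Finset G) (s : G → G → (A →ₗ[k] A)) (x : G → A) : G → A :=
  fun g => ∑ m ∈ M, s g m (x (g * m))

/-- The standard metric on `A^G` associated with the exhaustion `(E_n)` of `G`:
`d(x,y) = 2^{-n}` where `n = sup{k ∈ ℕ : x|_{E_k} = y|_{E_k}}`, and `d(x,y) = 0`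
if `x = y`. -/
noncomputable def stdMetric {G A : Type*} (E : ℕ → Finset G) (x y : G → A) : ℝ :=
  open scoped Classical in
  if x = y then 0
  else (2 : ℝ) ^ (-((sSup {n : ℕ | ∀ g ∈ E n, x g = y g} : ℕ) : ℤ))

/-- `τ_α = τ_1^{a_1} ∘ ⋯ ∘ τ_r^{a_r}` for `α = (a_1, …, a_r) ∈ ℕ^r`. -/
def tauAlpha {X : Type*} {r : ℕ} (τ : Fin r → X → X) (α : Fin r → ℕ) : X → X :=
  (List.ofFn (fun i : Fin r => (τ i)^[α i])).foldr (· ∘ ·) id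

set_option linter.unusedSectionVars false
set_option maxHeartbeats 1000000


open scoped BigOperators

section LinSolv

variable {k : Type*} [Field k] {A : Type*} [AddCommGroup A] [Module k A]
variable {ι : Type*}

/-- pairing between finitely supported families of functionals and points. -/
noncomputable def pair2 (y : ι → A) : (ι →₀ (A →ₗ[k] k)) →ₗ[k] k :=
  Finsupp.lsum k (fun i => LinearMap.applyₗ (y i))

@[simp] lemma pair2_single (y : ι → A) (i : ι) (ψ : A →ₗ[k] k) :
    pair2 y (Finsupp.single i ψ) = ψ (y i) := by
  simp [pair2]

variable [FiniteDimensional k A]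

theorem linSolv {J : Type*} (φ : J → (ι →₀ (A →ₗ[k] k))) (b : J → k)
    (h : ∀ q : J →₀ k, (q.sum fun j a => a • φ j) = 0 → (q.sum fun j a => a * b j) = 0) :
    ∃ y : ι → A, ∀ j, pair2 (k := k) y (φ j) = b j := by
  classical
  set T : (J →₀ k) →ₗ[k] (ι →₀ (A →ₗ[k] k)) :=
    Finsupp.lsum k (fun j => LinearMap.toSpanSingleton k _ (φ j)) with hT
  set β : (J →₀ k) →ₗ[k] k :=
    Finsupp.lsum k (fun j => LinearMap.toSpanSingleton k k (b j)) with hβ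
  have hTapp : ∀ q, T q = q.sum fun j a => a • φ j := by
    intro q
    rw [hT, Finsupp.lsum_apply]
    apply Finsupp.sum_congr
    intros; rw [LinearMap.toSpanSingleton_apply]
  have hβapp : ∀ q, β q = q.sum fun j a => a * b j := by
    intro q
    rw [hβ, Finsupp.lsum_apply]
    apply Finsupp.sum_congr
    intros; rw [LinearMap.toSpanSingleton_apply, smul_eq_mul]
  have hker : LinearMap.ker T ≤ LinearMap.ker β := by
    intro q hq
    rw [LinearMap.mem_ker] at hq ⊢
    rw [hβapp]; exact h q (by rw [← hTapp]; exact hq)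
  set f : ↥(LinearMap.range T) →ₗ[k] k :=
    (Submodule.liftQ (LinearMap.ker T) β hker).comp
      (LinearMap.quotKerEquivRange (R := k) (M := J →₀ k) (M₂ := ι →₀ (A →ₗ[k] k)) T).symm.toLinearMap with hf
  obtain ⟨g, hg⟩ := LinearMap.exists_extend (K := k) (V := ι →₀ (A →ₗ[k] k)) (p := LinearMap.range T) f
  have hgT : ∀ q, g (T q) = β q := by
    intro q
    have h1 : (⟨T q, LinearMap.mem_range_self T q⟩ : ↥(LinearMap.range T)) =
        (LinearMap.quotKerEquivRange (R := k) (M := J →₀ k) (M₂ := ι →₀ (A →ₗ[k] k)) T) (Submodule.Quotient.mk q) := by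
      exact Subtype.ext (LinearMap.quotKerEquivRange_apply_mk (R := k) (M := J →₀ k) (M₂ := ι →₀ (A →ₗ[k] k)) T q).symm
    have h2 : g (T q) = f ⟨T q, LinearMap.mem_range_self T q⟩ := by
      have h3 := congrArg (fun u => u ⟨T q, LinearMap.mem_range_self T q⟩) hg
      simp only [LinearMap.comp_apply, Submodule.coe_subtype] at h3
      exact h3
    rw [h2, hf]
    simp only [LinearMap.comp_apply, h1, LinearEquiv.coe_toLinearMap,
      LinearEquiv.symm_apply_apply]
    simp [Submodule.liftQ_apply]
  set y : ι → A := fun i => (Module.evalEquiv k A).symm (g.comp (Finsupp.lsingle i)) with hy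
  have hpair : ∀ c, pair2 (k := k) y c = g c := by
    have : (pair2 (k := k) y) = g := by
      apply Finsupp.lhom_ext
      intro i ψ
      have : ψ (y i) = (Module.evalEquiv k A (y i)) ψ := rfl
      rw [pair2_single, this, hy]
      simp only [LinearEquiv.apply_symm_apply]
      rfl
    intro c; rw [this]
  refine ⟨y, fun j => ?_⟩
  have h1 : T (Finsupp.single j 1) = φ j := by
    rw [hTapp]; simp
  have h2 : β (Finsupp.single j 1) = b j := by
    rw [hβapp]; simp
  rw [hpair, ← h1, hgT, h2]

theorem linSolv_of_finite {J : Type*} (φ : J → (ι →₀ (A →ₗ[k] k))) (b : J → k)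
    (h : ∀ s : Finset J, ∃ y : ι → A, ∀ j ∈ s, pair2 (k := k) y (φ j) = b j) :
    ∃ y : ι → A, ∀ j, pair2 (k := k) y (φ j) = b j := by
  apply linSolv
  intro q hq
  obtain ⟨y, hy⟩ := h q.support
  have h1 : (q.sum fun j a => a * b j) = q.sum fun j a => a * pair2 (k := k) y (φ j) := by
    apply Finsupp.sum_congr
    intro j hj
    rw [hy j hj]
  rw [h1]
  have h2 : (q.sum fun j a => a * pair2 (k := k) y (φ j))
      = pair2 (k := k) y (q.sum fun j a => a • φ j) := by
    rw [map_finsuppSum]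
    apply Finsupp.sum_congr
    intro j _
    rw [map_smul, smul_eq_mul]
  rw [h2, hq, map_zero]

end LinSolv

section Metric
variable {G A : Type*} {E : ℕ → Finset G}

lemma E_mono (hEmono : ∀ n, E n ⊆ E (n + 1)) : ∀ {a b : ℕ}, a ≤ b → E a ⊆ E b := by
  intro a b hab
  induction hab with
  | refl => exact fun g hg => hg
  | step _ ih => exact fun g hg => hEmono _ (ih hg)

lemma agreeSet_bddAbove (hEmono : ∀ n, E n ⊆ E (n + 1)) (hEexh : ∀ g : G, ∃ n, g ∈ E n)
    {x y : G → A} (hxy : x ≠ y) : BddAbove {n : ℕ | ∀ g ∈ E n, x g = y g} := by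
  have : ∃ g, x g ≠ y g := by
    by_contra h
    push_neg at h
    exact hxy (funext h)
  obtain ⟨g, hg⟩ := this
  obtain ⟨n0, hn0⟩ := hEexh g
  refine ⟨n0, fun j hj => ?_⟩
  by_contra hlt
  push_neg at hlt
  exact hg (hj g (E_mono hEmono (le_of_lt hlt) hn0))

lemma stdMetric_lt_of_agree (hEmono : ∀ n, E n ⊆ E (n + 1)) (hEexh : ∀ g : G, ∃ n, g ∈ E n)
    {x y : G → A} {n : ℕ} (h : ∀ g ∈ E n, x g = y g) {ε : ℝ}
    (hε : 0 < ε) (hn : (2 : ℝ) ^ (-(n : ℤ)) < ε) : stdMetric E x y < ε := by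
  classical
  rw [stdMetric]
  split_ifs with heq
  · exact hε
  · set N := (sSup {n : ℕ | ∀ g ∈ E n, x g = y g} : ℕ) with hN
    have hmem : n ∈ {n : ℕ | ∀ g ∈ E n, x g = y g} := h
    have hle : n ≤ N := le_csSup (agreeSet_bddAbove hEmono hEexh heq) hmem
    calc (2:ℝ) ^ (-(N:ℤ)) ≤ (2:ℝ) ^ (-(n:ℤ)) := by
          apply zpow_le_zpow_right₀ (by norm_num : (1:ℝ) ≤ 2); omega
      _ < ε := hn

lemma agree_of_stdMetric_lt (hE0 : E 0 = ∅) (hEmono : ∀ n, E n ⊆ E (n + 1))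
    (hEexh : ∀ g : G, ∃ n, g ∈ E n) {x y : G → A} {m : ℕ}
    (h : stdMetric E x y < (2 : ℝ) ^ (-(m : ℤ))) : ∀ g ∈ E m, x g = y g := by
  classical
  rw [stdMetric] at h
  split_ifs at h with heq
  · subst heq; intro g _; rfl
  · set S := {n : ℕ | ∀ g ∈ E n, x g = y g} with hS
    have hbdd : BddAbove S := agreeSet_bddAbove hEmono hEexh heq
    have hne : S.Nonempty := ⟨0, by intro g hg; rw [hE0] at hg; exact absurd hg (Finset.notMem_empty g)⟩
    have hmem : sSup S ∈ S := Nat.sSup_mem hne hbdd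
    have hlt : -((sSup S : ℕ) : ℤ) < -(m : ℤ) :=
      (zpow_lt_zpow_iff_right₀ (by norm_num : (1:ℝ) < 2)).mp h
    have hm : m ≤ sSup S := by omega
    intro g hg
    exact hmem g (E_mono hEmono hm hg)

end Metric

section NUCA

variable {k A G : Type*} [Field k] [AddCommGroup A] [Module k A] [Group G]

lemma nucaMap_add (M : Finset G) (s : G → G → (A →ₗ[k] A)) (x y : G → A) :
    nucaMap M s (x + y) = nucaMap M s x + nucaMap M s y := by
  funext g
  simp [nucaMap, Finset.sum_add_distrib]

lemma nucaMap_smul (M : Finset G) (s : G → G → (A →ₗ[k] A)) (c : k) (x : G → A) :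
    nucaMap M s (c • x) = c • nucaMap M s x := by
  funext g
  simp [nucaMap, Finset.smul_sum]

/-- `T` admits finitely supported functional representations of all its output coordinates. -/
def hasRep (k : Type*) [Field k] {A G : Type*} [AddCommGroup A] [Module k A]
    (T : (G → A) → (G → A)) : Prop :=
  ∀ (g : G) (ψ : A →ₗ[k] k), ∃ φ : G →₀ (A →ₗ[k] k),
    ∀ y : G → A, pair2 y φ = ψ (T y g)

lemma hasRep_id : hasRep k (id : (G → A) → (G → A)) := by
  intro g ψ
  exact ⟨Finsupp.single g ψ, fun y => by simp⟩

lemma hasRep_nucaMap (M : Finset G) (s : G → G → (A →ₗ[k] A)) :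
    hasRep k (nucaMap M s) := by
  intro g ψ
  refine ⟨∑ m ∈ M, Finsupp.single (g * m) (ψ ∘ₗ s g m), fun y => ?_⟩
  rw [map_sum]
  simp [nucaMap, pair2_single]

lemma hasRep_comp {T U : (G → A) → (G → A)} (hT : hasRep k T) (hU : hasRep k U) :
    hasRep k (T ∘ U) := by
  classical
  intro g ψ
  obtain ⟨φT, hφT⟩ := hT g ψ
  choose φU hφU using hU
  refine ⟨φT.sum fun h χ => φU h χ, fun y => ?_⟩
  rw [map_finsuppSum]
  calc (φT.sum fun h χ => pair2 y (φU h χ))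
      = φT.sum fun h χ => χ (U y h) := by
        apply Finsupp.sum_congr; intro h _; rw [hφU]
    _ = pair2 (U y) φT := by
        rw [pair2, Finsupp.lsum_apply]; rfl
    _ = ψ (T (U y) g) := hφT (U y)

lemma hasRep_iterate {T : (G → A) → (G → A)} (hT : hasRep k T) (n : ℕ) :
    hasRep k (T^[n]) := by
  induction n with
  | zero => simpa using hasRep_id
  | succ n ih =>
    rw [Function.iterate_succ]
    exact hasRep_comp ih hT

lemma hasRep_tauAlpha {r : ℕ} {τ : Fin r → (G → A) → (G → A)}
    (hτ : ∀ i, hasRep k (τ i)) (α : Fin r → ℕ) :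
    hasRep k (tauAlpha τ α) := by
  rw [tauAlpha]
  have : ∀ (l : List ((G → A) → (G → A))), (∀ T ∈ l, hasRep k T) →
      hasRep k (l.foldr (· ∘ ·) id) := by
    intro l
    induction l with
    | nil => intro _; simpa using hasRep_id
    | cons T l ih =>
      intro h
      rw [List.foldr_cons]
      exact hasRep_comp (h T List.mem_cons_self) (ih fun U hU => h U (List.mem_cons_of_mem _ hU))
  apply this
  intro T hT
  rw [List.mem_ofFn] at hT
  obtain ⟨i, rfl⟩ := hT
  exact hasRep_iterate (hτ i) _

end NUCA

section TauAlpha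

variable {X : Type*}

lemma comm_iterate {f g : X → X} (h : ∀ x, f (g x) = g (f x)) (a : ℕ) :
    ∀ x, f (g^[a] x) = g^[a] (f x) := by
  induction a with
  | zero => simp
  | succ a ih =>
    intro x
    rw [Function.iterate_succ_apply, Function.iterate_succ_apply, ih, h]

lemma tauAlpha_succ {r : ℕ} (τ : Fin (r+1) → X → X) (α : Fin (r+1) → ℕ) :
    tauAlpha τ α = (τ 0)^[α 0] ∘ tauAlpha (fun i => τ i.succ) (fun i => α i.succ) := by
  rw [tauAlpha, tauAlpha, List.ofFn_succ, List.foldr_cons]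

lemma tauAlpha_zero {r : ℕ} (τ : Fin r → X → X) : tauAlpha τ 0 = id := by
  induction r with
  | zero => rw [tauAlpha]; simp
  | succ r ih =>
    rw [tauAlpha_succ]
    simp only [Pi.zero_apply, Function.iterate_zero]
    show id ∘ tauAlpha (fun i => τ i.succ) (0 : Fin r → ℕ) = id
    rw [ih]
    rfl

lemma tauAlpha_single_add {r : ℕ} (τ : Fin r → X → X)
    (hcomm : ∀ i j x, τ i (τ j x) = τ j (τ i x)) (i : Fin r) (α : Fin r → ℕ) :
    tauAlpha τ (α + Pi.single i 1) = τ i ∘ tauAlpha τ α := by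
  induction r with
  | zero => exact i.elim0
  | succ r ih =>
    rcases Fin.eq_zero_or_eq_succ i with hi | ⟨i', rfl⟩
    · subst hi
      rw [tauAlpha_succ, tauAlpha_succ]
      have h0 : (α + Pi.single (0 : Fin (r+1)) 1 : Fin (r+1) → ℕ) 0 = α 0 + 1 := by simp
      have htail : (fun j : Fin r => (α + Pi.single (0 : Fin (r+1)) 1 : Fin (r+1) → ℕ) j.succ)
          = fun j : Fin r => α j.succ := by
        funext j
        simp [Pi.single_apply, (Fin.succ_ne_zero j)]
      rw [h0, htail, Function.iterate_succ']
      rfl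
    · rw [tauAlpha_succ, tauAlpha_succ]
      have h0 : (α + Pi.single i'.succ 1 : Fin (r+1) → ℕ) 0 = α 0 := by
        simp [Pi.single_apply, (Fin.succ_ne_zero i').symm]
      have htail : (fun j : Fin r => (α + Pi.single (i'.succ) 1 : Fin (r+1) → ℕ) j.succ)
          = (fun j : Fin r => α j.succ) + Pi.single i' 1 := by
        funext j
        simp only [Pi.add_apply, Pi.single_apply, Fin.succ_inj]
      rw [h0, htail, ih (fun j => τ j.succ) (fun a b x => hcomm _ _ x) i']
      funext x
      simp only [Function.comp_apply]
      exact (comm_iterate (hcomm i'.succ 0) (α 0) _).symm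

lemma exact_orbit {r : ℕ} (τ : Fin r → X → X)
    (hcomm : ∀ i j x, τ i (τ j x) = τ j (τ i x))
    (x : (Fin r → ℕ) → X)
    (hx : ∀ (i : Fin r) (α : Fin r → ℕ), x (α + Pi.single i 1) = τ i (x α)) :
    ∀ α, x α = tauAlpha τ α (x 0) := by
  have main : ∀ (n : ℕ) (α : Fin r → ℕ), (∑ i, α i) = n → x α = tauAlpha τ α (x 0) := by
    intro n
    induction n with
    | zero =>
      intro α hα
      have : α = 0 := by
        funext i
        have := Finset.sum_eq_zero_iff.mp hα i (Finset.mem_univ i)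
        simpa using this
      subst this
      rw [tauAlpha_zero]
      rfl
    | succ n ih =>
      intro α hα
      have hex : ∃ i, 0 < α i := by
        by_contra hc
        push_neg at hc
        have : (∑ i, α i) = 0 := Finset.sum_eq_zero (fun i _ => by have := hc i; omega)
        omega
      obtain ⟨i, hi⟩ := hex
      set β : Fin r → ℕ := fun j => if j = i then α j - 1 else α j with hβ
      have hαβ : α = β + Pi.single i 1 := by
        funext j
        simp only [Pi.add_apply, Pi.single_apply, hβ]
        by_cases hj : j = i
        · subst hj; simp; omega
        · simp [hj]
      have hsum : (∑ j, β j) = n := by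
        have h1 : ∀ j, α j = β j + (if j = i then 1 else 0) := by
          intro j
          by_cases hj : j = i
          · subst hj; simp [hβ]; omega
          · simp [hβ, hj]
        have h2 : (∑ j, α j) = (∑ j, β j) + ∑ j, (if j = i then 1 else 0) := by
          rw [← Finset.sum_add_distrib]
          exact Finset.sum_congr rfl (fun j _ => h1 j)
        have h3 : (∑ j : Fin r, (if j = i then (1:ℕ) else 0)) = 1 := by simp
        omega
      rw [hαβ, hx i β, ih β hsum, tauAlpha_single_add τ hcomm]
      rfl
  intro α
  exact main _ α rfl

end TauAlpha


section Lfun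
variable {k : Type*} [Field k] {M : Type*} [AddCommMonoid M]

noncomputable def Lfun (F : M → k) : AddMonoidAlgebra k M →ₗ[k] k where
  toFun p := Finsupp.sum p.coeff fun α a => a * F α
  map_add' p q := Finsupp.sum_add_index' (fun α => zero_mul _) (fun α b₁ b₂ => add_mul _ _ _)
  map_smul' c p := by
    simp only [RingHom.id_apply, smul_eq_mul]
    have h1 : Finsupp.sum (c • p).coeff (fun α a => a * F α) = p.coeff.sum fun α a => (c * a) * F α :=
      Finsupp.sum_smul_index (fun α => zero_mul _)
    rw [h1, Finsupp.mul_sum]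
    apply Finsupp.sum_congr
    intros
    rw [mul_assoc]

lemma Lfun_apply (F : M → k) (p : AddMonoidAlgebra k M) :
    Lfun F p = p.coeff.sum fun α a => a * F α := rfl

lemma Lfun_single (F : M → k) (α : M) (a : k) :
    Lfun F (AddMonoidAlgebra.single α a) = a * F α := by
  rw [Lfun_apply]
  exact Finsupp.sum_single_index (zero_mul _)

lemma Lfun_congr (F F' : M → k) (p : AddMonoidAlgebra k M)
    (h : ∀ α ∈ p.coeff.support, F α = F' α) : Lfun F p = Lfun F' p := by
  rw [Lfun_apply, Lfun_apply]
  apply Finsupp.sum_congr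
  intro α hα
  rw [h α hα]

lemma Lfun_mul (F : M → k) (s p : AddMonoidAlgebra k M) :
    Lfun F (s * p) = s.coeff.sum fun β b => b * Lfun (fun α => F (β + α)) p := by
  induction p using AddMonoidAlgebra.induction_linear with
  | zero =>
    rw [mul_zero, map_zero]
    symm
    apply Finset.sum_eq_zero
    intro β hβ
    show s.coeff β * Lfun (fun α => F (β + α)) 0 = 0
    rw [map_zero, mul_zero]
  | add f g hf hg =>
    rw [mul_add, map_add, hf, hg, ← Finsupp.sum_add]
    apply Finsupp.sum_congr
    intros; rw [map_add, mul_add]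
  | single α a =>
    have hs : s * AddMonoidAlgebra.single α a
        = s.coeff.sum fun β b => AddMonoidAlgebra.single (β + α) (b * a) := by
      conv_lhs => rw [← AddMonoidAlgebra.sum_coeff_single s]
      rw [Finsupp.sum_mul]
      apply Finsupp.sum_congr
      intro β hβ
      exact AddMonoidAlgebra.single_mul_single _ _ _ _
    rw [hs, map_finsuppSum]
    apply Finsupp.sum_congr
    intro β hβ
    rw [Lfun_single, Lfun_single, mul_assoc]

end Lfun

section KeyDefs

variable {k A G : Type*} [Field k] [AddCommGroup A] [Module k A] [Group G]

/-- pseudo-orbit with errors vanishing on the window `E m`. -/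
def Pseudo (E : ℕ → Finset G) {r : ℕ} (τ : Fin r → (G → A) → (G → A))
    (m : ℕ) (x : (Fin r → ℕ) → (G → A)) : Prop :=
  ∀ (i : Fin r) (α : Fin r → ℕ), ∀ g ∈ E m, τ i (x α) g = x (α + Pi.single i 1) g

/-- exact orbit family. -/
def ExactO {r : ℕ} (τ : Fin r → (G → A) → (G → A)) (x : (Fin r → ℕ) → (G → A)) : Prop :=
  ∀ (i : Fin r) (α : Fin r → ℕ), τ i (x α) = x (α + Pi.single i 1)

/-- window restriction. -/
def win (E : ℕ → Finset G) (n : ℕ) (x : G → A) : ↥(E n) → A := fun g => x ↑g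

lemma E_mono' {E : ℕ → Finset G} (hEmono : ∀ n, E n ⊆ E (n + 1)) :
    ∀ {a b : ℕ}, a ≤ b → E a ⊆ E b := by
  intro a b hab
  induction hab with
  | refl => exact fun g hg => hg
  | step _ ih => exact fun g hg => hEmono _ (ih hg)

lemma Pseudo_mono {E : ℕ → Finset G} {r : ℕ} {τ : Fin r → (G → A) → (G → A)}
    (hEmono : ∀ n, E n ⊆ E (n + 1)) {m m' : ℕ} (h : m ≤ m')
    {x : (Fin r → ℕ) → (G → A)} (hx : Pseudo E τ m' x) : Pseudo E τ m x := by
  intro i α g hg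
  exact hx i α g (E_mono' hEmono h hg)

lemma Pseudo_shift {E : ℕ → Finset G} {r : ℕ} {τ : Fin r → (G → A) → (G → A)}
    {m : ℕ} {x : (Fin r → ℕ) → (G → A)} (hx : Pseudo E τ m x) (β : Fin r → ℕ) :
    Pseudo E τ m (fun γ => x (β + γ)) := by
  intro i α g hg
  have := hx i (β + α) g hg
  rwa [add_assoc] at this

lemma Pseudo_add {E : ℕ → Finset G} {r : ℕ} {τ : Fin r → (G → A) → (G → A)}
    (hadd : ∀ i (u v : G → A), τ i (u + v) = τ i u + τ i v)
    {m : ℕ} {x x' : (Fin r → ℕ) → (G → A)} (hx : Pseudo E τ m x) (hx' : Pseudo E τ m x') :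
    Pseudo E τ m (x + x') := by
  intro i α g hg
  have h1 := hx i α g hg
  have h2 := hx' i α g hg
  show τ i (x α + x' α) g = (x (α + Pi.single i 1) + x' (α + Pi.single i 1)) g
  rw [hadd]
  show τ i (x α) g + τ i (x' α) g = x (α + Pi.single i 1) g + x' (α + Pi.single i 1) g
  rw [h1, h2]

lemma Pseudo_smul {E : ℕ → Finset G} {r : ℕ} {τ : Fin r → (G → A) → (G → A)}
    (hsmul : ∀ i (c : k) (u : G → A), τ i (c • u) = c • τ i u)
    {m : ℕ} (c : k) {x : (Fin r → ℕ) → (G → A)} (hx : Pseudo E τ m x) :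
    Pseudo E τ m (c • x) := by
  intro i α g hg
  have h1 := hx i α g hg
  show τ i (c • x α) g = (c • x (α + Pi.single i 1)) g
  rw [hsmul]
  show c • τ i (x α) g = c • x (α + Pi.single i 1) g
  rw [h1]

lemma Pseudo_zero {E : ℕ → Finset G} {r : ℕ} {τ : Fin r → (G → A) → (G → A)}
    (hadd : ∀ i (u v : G → A), τ i (u + v) = τ i u + τ i v) (m : ℕ) :
    Pseudo E τ m (0 : (Fin r → ℕ) → (G → A)) := by
  have h0 : ∀ i, τ i 0 = 0 := by
    intro i
    have h := hadd i 0 0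
    rw [add_zero] at h
    have := add_left_cancel (a := τ i 0) (b := τ i 0) (c := 0) (by rw [add_zero]; exact h.symm)
    exact this
  intro i α g hg
  simp [h0 i]

variable (E : ℕ → Finset G) {r : ℕ}

/-- `pairX` as a linear map in the polynomial-vector variable. -/
noncomputable def pairXL (n : ℕ) {d : ℕ}
    (bV : Module.Basis (Fin d) k (Module.Dual k (↥(E n) → A)))
    (x : (Fin r → ℕ) → (G → A)) :
    (Fin d → AddMonoidAlgebra k (Fin r → ℕ)) →ₗ[k] k :=
  ∑ j, (Lfun (fun α => bV j (win E n (x α)))).comp (LinearMap.proj j)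

lemma pairXL_apply (n : ℕ) {d : ℕ} (bV : Module.Basis (Fin d) k (Module.Dual k (↥(E n) → A)))
    (x : (Fin r → ℕ) → (G → A)) (P : Fin d → AddMonoidAlgebra k (Fin r → ℕ)) :
    pairXL E n bV x P = ∑ j, Lfun (fun α => bV j (win E n (x α))) (P j) := by
  rw [pairXL, LinearMap.sum_apply]
  rfl

/-- elementary polynomial vector representing the functional `f` at position `α`. -/
noncomputable def elemX (n : ℕ) {d : ℕ} (bV : Module.Basis (Fin d) k (Module.Dual k (↥(E n) → A)))
    (α : Fin r → ℕ) (f : Module.Dual k (↥(E n) → A)) :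
    Fin d → AddMonoidAlgebra k (Fin r → ℕ) :=
  fun j => AddMonoidAlgebra.single α (bV.repr f j)

lemma pairXL_elemX (n : ℕ) {d : ℕ} (bV : Module.Basis (Fin d) k (Module.Dual k (↥(E n) → A)))
    (x : (Fin r → ℕ) → (G → A)) (α : Fin r → ℕ) (f : Module.Dual k (↥(E n) → A)) :
    pairXL E n bV x (elemX E n bV α f) = f (win E n (x α)) := by
  rw [pairXL_apply]
  have h1 : ∀ j, Lfun (fun β => bV j (win E n (x β))) (elemX E n bV α f j)
      = bV.repr f j * bV j (win E n (x α)) := by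
    intro j
    rw [elemX, Lfun_single]
  rw [Finset.sum_congr rfl (fun j _ => h1 j)]
  have h2 := bV.sum_repr f
  calc ∑ j, bV.repr f j * bV j (win E n (x α))
      = (∑ j, bV.repr f j • bV j) (win E n (x α)) := by
        rw [LinearMap.sum_apply]
        apply Finset.sum_congr rfl
        intro j _
        rw [LinearMap.smul_apply, smul_eq_mul]
    _ = f (win E n (x α)) := by rw [h2]

lemma pairXL_congr (n : ℕ) {d : ℕ} (bV : Module.Basis (Fin d) k (Module.Dual k (↥(E n) → A)))
    (x x' : (Fin r → ℕ) → (G → A)) (P : Fin d → AddMonoidAlgebra k (Fin r → ℕ))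
    (h : ∀ j, ∀ α ∈ (P j).coeff.support, win E n (x α) = win E n (x' α)) :
    pairXL E n bV x P = pairXL E n bV x' P := by
  rw [pairXL_apply, pairXL_apply]
  apply Finset.sum_congr rfl
  intro j _
  apply Lfun_congr
  intro α hα
  rw [h j α hα]

lemma pairXL_smul (n : ℕ) {d : ℕ} (bV : Module.Basis (Fin d) k (Module.Dual k (↥(E n) → A)))
    (x : (Fin r → ℕ) → (G → A)) (s : AddMonoidAlgebra k (Fin r → ℕ))
    (P : Fin d → AddMonoidAlgebra k (Fin r → ℕ)) :
    pairXL E n bV x (s • P) = s.coeff.sum fun β b => b * pairXL E n bV (fun γ => x (β + γ)) P := by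
  rw [pairXL_apply]
  have h1 : ∀ j, (s • P) j = s * P j := fun j => rfl
  calc ∑ j, Lfun (fun α => bV j (win E n (x α))) ((s • P) j)
      = ∑ j, s.coeff.sum fun β b => b * Lfun (fun α => bV j (win E n (x (β + α)))) (P j) := by
        apply Finset.sum_congr rfl
        intro j _
        rw [h1 j, Lfun_mul]
    _ = s.coeff.sum fun β b => b * ∑ j, Lfun (fun α => bV j (win E n (x (β + α)))) (P j) := by
        show (∑ j, ∑ β ∈ s.coeff.support, s.coeff β * Lfun (fun α => bV j (win E n (x (β + α)))) (P j))
            = ∑ β ∈ s.coeff.support, s.coeff β * ∑ j, Lfun (fun α => bV j (win E n (x (β + α)))) (P j)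
        rw [Finset.sum_comm]
        apply Finset.sum_congr rfl
        intro β _
        rw [Finset.mul_sum]
    _ = s.coeff.sum fun β b => b * pairXL E n bV (fun γ => x (β + γ)) P := by
        apply Finsupp.sum_congr
        intro β _
        rw [pairXL_apply]

variable (τ : Fin r → (G → A) → (G → A))

/-- The annihilator of level-`m` pseudo-orbits, as a module over the monoid algebra. -/
noncomputable def Usub (n : ℕ) {d : ℕ} (bV : Module.Basis (Fin d) k (Module.Dual k (↥(E n) → A)))
    (m : ℕ) :
    Submodule (AddMonoidAlgebra k (Fin r → ℕ)) (Fin d → AddMonoidAlgebra k (Fin r → ℕ)) where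
  carrier := {P | ∀ x, Pseudo E τ m x → pairXL E n bV x P = 0}
  add_mem' := by
    intro P Q hP hQ x hx
    rw [map_add, hP x hx, hQ x hx, add_zero]
  zero_mem' := by
    intro x hx
    rw [map_zero]
  smul_mem' := by
    intro s P hP x hx
    rw [pairXL_smul]
    apply Finset.sum_eq_zero
    intro β hβ
    show s.coeff β * pairXL E n bV (fun γ => x (β + γ)) P = 0
    rw [hP (fun γ => x (β + γ)) (Pseudo_shift hx β), mul_zero]

lemma Usub_mono (hEmono : ∀ n, E n ⊆ E (n + 1)) (n : ℕ) {d : ℕ}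
    (bV : Module.Basis (Fin d) k (Module.Dual k (↥(E n) → A))) :
    Monotone (Usub E τ n bV) := by
  intro m m' hmm' P hP x hx
  exact hP x (Pseudo_mono hEmono hmm' hx)

end KeyDefs

section Noeth

variable {k : Type*} [Field k] (r : ℕ)

lemma noeth_monoidAlg : IsNoetherianRing (AddMonoidAlgebra k (Fin r → ℕ)) := by
  have e : (Fin r →₀ ℕ) ≃+ (Fin r → ℕ) :=
    { Finsupp.equivFunOnFinite with map_add' := fun f g => Finsupp.coe_add f g }
  have := MvPolynomial.isNoetherianRing (R := k) (σ := Fin r)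
  exact isNoetherianRing_of_ringEquiv (MvPolynomial (Fin r) k)
    (AddMonoidAlgebra.domCongr k k e).toRingEquiv

lemma noeth_pi (d : ℕ) :
    IsNoetherian (AddMonoidAlgebra k (Fin r → ℕ))
      (Fin d → AddMonoidAlgebra k (Fin r → ℕ)) := by
  haveI := noeth_monoidAlg (k := k) r
  exact isNoetherian_pi

end Noeth

section Final
set_option linter.unusedSectionVars false
set_option maxHeartbeats 1000000

variable {k A G : Type*} [Field k] [AddCommGroup A] [Module k A]
  [FiniteDimensional k A] [Group G]

lemma finset_sub_E {E : ℕ → Finset G} (hEmono : ∀ n, E n ⊆ E (n + 1))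
    (hEexh : ∀ g : G, ∃ n, g ∈ E n) (F : Finset G) : ∃ m, ∀ g ∈ F, g ∈ E m := by
  classical
  induction F using Finset.induction_on with
  | empty => exact ⟨0, fun g hg => absurd hg (Finset.notMem_empty g)⟩
  | @insert a t ha ih =>
    obtain ⟨m1, hm1⟩ := ih
    obtain ⟨m2, hm2⟩ := hEexh a
    refine ⟨max m1 m2, fun g hg => ?_⟩
    rcases Finset.mem_insert.mp hg with rfl | hgs
    · exact E_mono' hEmono (le_max_right m1 m2) hm2
    · exact E_mono' hEmono (le_max_left m1 m2) (hm1 g hgs)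

lemma pt_eq_of_dual {u v : A} (h : ∀ ψ : A →ₗ[k] k, ψ u = ψ v) : u = v := by
  have h2 : ∀ ψ : Module.Dual k A, ψ (u - v) = 0 := by
    intro ψ
    rw [map_sub, h ψ, sub_self]
  have := (Module.forall_dual_apply_eq_zero_iff k (u - v)).mp h2
  exact sub_eq_zero.mp this

lemma win_eq_of_dual {E : ℕ → Finset G} {n : ℕ} {u v : ↥(E n) → A}
    (h : ∀ f : Module.Dual k (↥(E n) → A), f u = f v) : u = v := by
  have h2 : ∀ f : Module.Dual k (↥(E n) → A), f (u - v) = 0 := by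
    intro f
    rw [map_sub, h f, sub_self]
  have := (Module.forall_dual_apply_eq_zero_iff k (u - v)).mp h2
  exact sub_eq_zero.mp this

lemma rep_window {E : ℕ → Finset G} {T : (G → A) → (G → A)} (hT : hasRep k T) (n : ℕ)
    (f : Module.Dual k (↥(E n) → A)) :
    ∃ φ : G →₀ (A →ₗ[k] k), ∀ y, pair2 y φ = f (win E n (T y)) := by
  classical
  choose ψrep hψrep using hT
  refine ⟨∑ g : ↥(E n), ψrep (↑g) (f ∘ₗ LinearMap.single k (fun _ : ↥(E n) => A) g),
    fun y => ?_⟩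
  rw [map_sum]
  have h1 : ∀ g : ↥(E n), pair2 y (ψrep (↑g) (f ∘ₗ LinearMap.single k (fun _ : ↥(E n) => A) g))
      = f (Pi.single g (T y ↑g)) := by
    intro g
    rw [hψrep]
    rfl
  rw [Finset.sum_congr rfl (fun g _ => h1 g), ← map_sum]
  congr 1
  exact Finset.univ_sum_single (win E n (T y))

lemma mem_Usub {E : ℕ → Finset G} {r : ℕ} {τ : Fin r → (G → A) → (G → A)} {n : ℕ} {d : ℕ}
    {bV : Module.Basis (Fin d) k (Module.Dual k (↥(E n) → A))} {m : ℕ}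
    {P : Fin d → AddMonoidAlgebra k (Fin r → ℕ)} :
    P ∈ Usub E τ n bV m ↔ ∀ x, Pseudo E τ m x → pairXL E n bV x P = 0 := Iff.rfl

lemma exists_level {E : ℕ → Finset G} (hEmono : ∀ n, E n ⊆ E (n + 1))
    (hEexh : ∀ g : G, ∃ n, g ∈ E n)
    {r : ℕ} {τ : Fin r → (G → A) → (G → A)}
    (M : Fin r → Finset G) (s : Fin r → G → G → (A →ₗ[k] A))
    (hτs : ∀ i, τ i = nucaMap (M i) (s i))
    (n : ℕ) {d : ℕ} (bV : Module.Basis (Fin d) k (Module.Dual k (↥(E n) → A)))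
    (P : Fin d → AddMonoidAlgebra k (Fin r → ℕ))
    (hP : ∀ x, ExactO τ x → pairXL E n bV x P = 0) :
    ∃ m, P ∈ Usub E τ n bV m := by
  classical
  have hadd : ∀ i (u v : G → A), τ i (u + v) = τ i u + τ i v := by
    intro i u v; rw [hτs i]; exact nucaMap_add _ _ u v
  have hsmul : ∀ i (c : k) (u : G → A), τ i (c • u) = c • τ i u := by
    intro i c u; rw [hτs i]; exact nucaMap_smul _ _ c u
  set Fs : Finset (Fin r → ℕ) := Finset.univ.biUnion (fun j : Fin d => (P j).coeff.support)
    with hFs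
  set V : ℕ → Submodule k (↥Fs → (↥(E n) → A)) := fun m =>
    { carrier := {z | ∃ x, Pseudo E τ m x ∧ ∀ a : ↥Fs, z a = win E n (x ↑a)}
      add_mem' := by
        rintro z z' ⟨x, hx, hzx⟩ ⟨x', hx', hzx'⟩
        exact ⟨x + x', Pseudo_add hadd hx hx', fun a => by
          show z a + z' a = _
          rw [hzx a, hzx' a]; rfl⟩
      zero_mem' := ⟨0, Pseudo_zero hadd m, fun a => rfl⟩
      smul_mem' := by
        rintro c z ⟨x, hx, hzx⟩
        exact ⟨c • x, Pseudo_smul hsmul c hx, fun a => by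
          show c • z a = _
          rw [hzx a]; rfl⟩ } with hV
  have hVmem : ∀ m z, z ∈ V m ↔ ∃ x, Pseudo E τ m x ∧ ∀ a : ↥Fs, z a = win E n (x ↑a) :=
    fun m z => Iff.rfl
  have hVanti : ∀ {m m' : ℕ}, m ≤ m' → V m' ≤ V m := by
    intro m m' h z hz
    obtain ⟨x, hx, hzx⟩ := (hVmem m' z).mp hz
    exact (hVmem m z).mpr ⟨x, Pseudo_mono hEmono h hx, hzx⟩
  obtain ⟨m0, hm0⟩ : ∃ m0, Module.finrank k (V m0)
      = sInf (Set.range fun m => Module.finrank k (V m)) :=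
    Nat.sInf_mem (Set.range_nonempty _)
  have hVeq : ∀ m, m0 ≤ m → V m = V m0 := by
    intro m hm
    apply Submodule.eq_of_le_of_finrank_le (hVanti hm)
    rw [hm0]
    exact Nat.sInf_le ⟨m, rfl⟩
  refine ⟨m0, mem_Usub.mpr fun x hx => ?_⟩
  set z : ↥Fs → (↥(E n) → A) := fun a => win E n (x ↑a) with hz
  have hzm0 : z ∈ V m0 := (hVmem m0 z).mpr ⟨x, hx, fun a => rfl⟩
  have hreal : ∀ m, ∃ x', Pseudo E τ m x' ∧ ∀ a : ↥Fs, z a = win E n (x' ↑a) := by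
    intro m
    rcases le_total m m0 with h | h
    · exact (hVmem m z).mp (hVanti h hzm0)
    · exact (hVmem m z).mp (by rw [hVeq m h]; exact hzm0)
  -- build an exact orbit with the same window data via the solvability principle
  set φJ : ((Fin r × (Fin r → ℕ) × G × (A →ₗ[k] k)) ⊕ (↥Fs × ↥(E n) × (A →ₗ[k] k)))
      → ((Fin r → ℕ) × G →₀ (A →ₗ[k] k)) := fun j => match j with
    | .inl (i, α, g, ψ) => (∑ m' ∈ M i, Finsupp.single (α, g * m') (ψ ∘ₗ s i g m'))
        - Finsupp.single (α + Pi.single i 1, g) ψ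
    | .inr (a, g, ψ) => Finsupp.single ((↑a : Fin r → ℕ), (↑g : G)) ψ with hφJ
  set bJ : ((Fin r × (Fin r → ℕ) × G × (A →ₗ[k] k)) ⊕ (↥Fs × ↥(E n) × (A →ₗ[k] k))) → k :=
    fun j => match j with
    | .inl _ => 0
    | .inr (a, g, ψ) => ψ (z a g) with hbJ
  have hφval : ∀ (X : (Fin r → ℕ) × G → A) (i : Fin r) (α : Fin r → ℕ) (g : G)
      (ψ : A →ₗ[k] k), pair2 X (φJ (.inl (i, α, g, ψ)))
        = ψ (τ i (fun h => X (α, h)) g) - ψ (X (α + Pi.single i 1, g)) := by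
    intro X i α g ψ
    show pair2 X ((∑ m' ∈ M i, Finsupp.single (α, g * m') (ψ ∘ₗ s i g m'))
        - Finsupp.single (α + Pi.single i 1, g) ψ) = _
    rw [map_sub (pair2 (k := k) X), map_sum]
    simp only [pair2_single]
    have hτval : τ i (fun h => X (α, h)) g = ∑ m' ∈ M i, s i g m' (X (α, g * m')) := by
      rw [hτs i]; rfl
    have hsum : (∑ m' ∈ M i, (ψ ∘ₗ s i g m') (X (α, g * m'))) = ψ (τ i (fun h => X (α, h)) g) := by
      rw [hτval, map_sum]; rfl
    rw [hsum]
  have hfin : ∀ sJ : Finset ((Fin r × (Fin r → ℕ) × G × (A →ₗ[k] k)) ⊕ (↥Fs × ↥(E n) × (A →ₗ[k] k))),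
      ∃ X : (Fin r → ℕ) × G → A, ∀ j ∈ sJ, pair2 X (φJ j) = bJ j := by
    intro sJ
    set Fg : Finset G := sJ.biUnion (fun j => match j with
      | .inl (i, α, g, ψ) => {g}
      | .inr _ => (∅ : Finset G)) with hFg
    obtain ⟨mg, hmg⟩ := finset_sub_E hEmono hEexh Fg
    obtain ⟨x', hx'ps, hx'z⟩ := hreal mg
    refine ⟨fun p => x' p.1 p.2, fun j hj => ?_⟩
    match j with
    | .inl (i, α, g, ψ) =>
      have hg : g ∈ E mg := by
        apply hmg
        rw [hFg]
        apply Finset.mem_biUnion.mpr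
        exact ⟨Sum.inl (i, α, g, ψ), hj, Finset.mem_singleton_self g⟩
      rw [hφval]
      show ψ (τ i (x' α) g) - ψ (x' (α + Pi.single i 1) g) = bJ (.inl (i, α, g, ψ))
      rw [hx'ps i α g hg]
      show _ = (0 : k)
      rw [sub_self]
    | .inr (a, g, ψ) =>
      show pair2 (fun p => x' p.1 p.2) (Finsupp.single ((↑a : Fin r → ℕ), (↑g : G)) ψ)
        = ψ (z a g)
      rw [pair2_single, hx'z a]
      rfl
  obtain ⟨Xs, hXs⟩ := linSolv_of_finite φJ bJ hfin
  set x'' : (Fin r → ℕ) → G → A := fun α h => Xs (α, h) with hx''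
  have hexact : ExactO τ x'' := by
    intro i α
    funext g
    apply pt_eq_of_dual (k := k)
    intro ψ
    have h1 := hXs (Sum.inl (i, α, g, ψ))
    rw [hφval] at h1
    have h2 : bJ (.inl (i, α, g, ψ)) = 0 := rfl
    rw [h2] at h1
    exact sub_eq_zero.mp h1
  have hwin : ∀ a : ↥Fs, win E n (x'' ↑a) = z a := by
    intro a
    funext g
    apply pt_eq_of_dual (k := k)
    intro ψ
    have h1 := hXs (Sum.inr (a, g, ψ))
    have h2 : pair2 Xs (φJ (.inr (a, g, ψ))) = ψ (x'' ↑a ↑g) := by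
      show pair2 Xs (Finsupp.single ((↑a : Fin r → ℕ), (↑g : G)) ψ) = _
      rw [pair2_single]
    rw [h2] at h1
    exact h1
  have h0 := hP x'' hexact
  rw [← h0]
  apply pairXL_congr
  intro j α hα
  have haF : α ∈ Fs := Finset.mem_biUnion.mpr ⟨j, Finset.mem_univ j, hα⟩
  exact (hwin ⟨α, haF⟩).symm

theorem key {E : ℕ → Finset G} (hEmono : ∀ n, E n ⊆ E (n + 1))
    (hEexh : ∀ g : G, ∃ n, g ∈ E n)
    {r : ℕ} {τ : Fin r → (G → A) → (G → A)}
    (M : Fin r → Finset G) (s : Fin r → G → G → (A →ₗ[k] A))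
    (hτs : ∀ i, τ i = nucaMap (M i) (s i))
    (hcomm : ∀ i j x, τ i (τ j x) = τ j (τ i x)) (n : ℕ) :
    ∃ m, ∀ x, Pseudo E τ m x →
      ∃ y : G → A, ∀ α, win E n (tauAlpha τ α y) = win E n (x α) := by
  classical
  set bV : Module.Basis (Fin (Module.finrank k (Module.Dual k (↥(E n) → A)))) k
      (Module.Dual k (↥(E n) → A)) := Module.finBasis k _ with hbV
  haveI hnoeth := noeth_pi (k := k) r (Module.finrank k (Module.Dual k (↥(E n) → A)))
  obtain ⟨m0, hm0⟩ := monotone_stabilizes_iff_noetherian.mpr hnoeth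
    ⟨Usub E τ n bV, Usub_mono E τ hEmono n bV⟩
  refine ⟨m0, fun x hx => ?_⟩
  have hrepτ : ∀ α : Fin r → ℕ, hasRep k (tauAlpha τ α) := by
    intro α
    apply hasRep_tauAlpha
    intro i
    rw [hτs i]
    exact hasRep_nucaMap _ _
  choose φw hφw using fun (p : (Fin r → ℕ) × Module.Dual k (↥(E n) → A)) =>
    rep_window (hrepτ p.1) n p.2
  set bw : ((Fin r → ℕ) × Module.Dual k (↥(E n) → A)) → k :=
    fun p => p.2 (win E n (x p.1)) with hbw
  have hdep : ∀ q : ((Fin r → ℕ) × Module.Dual k (↥(E n) → A)) →₀ k,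
      (q.sum fun p a => a • φw p) = 0 → (q.sum fun p a => a * bw p) = 0 := by
    intro q hq
    set c : Fin (Module.finrank k (Module.Dual k (↥(E n) → A)))
        → AddMonoidAlgebra k (Fin r → ℕ) :=
      q.sum fun p a => a • elemX E n bV p.1 p.2 with hc
    have hpairc : ∀ x' : (Fin r → ℕ) → G → A,
        pairXL E n bV x' c = q.sum fun p a => a * p.2 (win E n (x' p.1)) := by
      intro x'
      rw [hc, map_finsuppSum]
      apply Finsupp.sum_congr
      intro p hp
      rw [map_smul, pairXL_elemX, smul_eq_mul]
    have hcU : ∀ x', ExactO τ x' → pairXL E n bV x' c = 0 := by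
      intro x' hx'
      have horb := exact_orbit τ hcomm x' (fun i α => (hx' i α).symm)
      rw [hpairc x']
      have h1 : (q.sum fun p a => a * p.2 (win E n (x' p.1)))
          = q.sum fun p a => a * pair2 (x' 0) (φw p) := by
        apply Finsupp.sum_congr
        intro p hp
        rw [hφw p (x' 0), ← horb p.1]
      rw [h1]
      have h2 : (q.sum fun p a => a * pair2 (x' 0) (φw p))
          = pair2 (x' 0) (q.sum fun p a => a • φw p) := by
        rw [map_finsuppSum]
        apply Finsupp.sum_congr
        intro p hp
        rw [map_smul, smul_eq_mul]
      rw [h2, hq, map_zero]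
    obtain ⟨m1, hm1⟩ := exists_level hEmono hEexh M s hτs n bV c hcU
    have hcU0 : c ∈ Usub E τ n bV m0 := by
      have h1 : c ∈ Usub E τ n bV (max m0 m1) :=
        Usub_mono E τ hEmono n bV (le_max_right m0 m1) hm1
      have h2 := hm0 (max m0 m1) (le_max_left m0 m1)
      have h3 : Usub E τ n bV m0 = Usub E τ n bV (max m0 m1) := h2
      rw [h3]
      exact h1
    have hfin := mem_Usub.mp hcU0 x hx
    rw [hpairc x] at hfin
    exact hfin
  obtain ⟨y, hy⟩ := linSolv (ι := G) (φ := φw) (b := bw) hdep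
  refine ⟨y, fun α => ?_⟩
  apply win_eq_of_dual (k := k)
  intro f
  have hthis := hy (α, f)
  rw [hφw (α, f) y] at hthis
  exact hthis

end Final

/-- Shadowing property for commuting families of linear NUCA with finite memory over
a finite-dimensional vector space alphabet: for every `ε > 0` there is `δ > 0` such
that every `δ`-pseudo-orbit `(x_α)_{α ∈ ℕ^r}` is `ε`-shadowed by some `y ∈ A^G`. -/
theorem stmt19 {k A G : Type*} [Field k] [AddCommGroup A] [Module k A]
    [FiniteDimensional k A] [Group G] [Countable G]
    (E : ℕ → Finset G) (hE0 : E 0 = ∅) (hEmono : ∀ n, E n ⊆ E (n + 1))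
    (hEexh : ∀ g : G, ∃ n, g ∈ E n)
    (r : ℕ) (τ : Fin r → (G → A) → (G → A))
    (hτ : ∀ i, ∃ (M : Finset G) (s : G → G → (A →ₗ[k] A)), τ i = nucaMap M s)
    (hcomm : ∀ i j x, τ i (τ j x) = τ j (τ i x)) :
    ∀ ε : ℝ, 0 < ε → ∃ δ : ℝ, 0 < δ ∧
      ∀ x : (Fin r → ℕ) → (G → A),
        (∀ (i : Fin r) (α : Fin r → ℕ),
          stdMetric E (τ i (x α)) (x (α + Pi.single i 1)) < δ) →
        ∃ y : G → A, ∀ α : Fin r → ℕ, stdMetric E (tauAlpha τ α y) (x α) < ε := by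
  classical
  intro ε hε
  choose M s hτs using hτ
  obtain ⟨n, hn⟩ : ∃ n : ℕ, (2:ℝ) ^ (-(n:ℤ)) < ε := by
    obtain ⟨n, hn⟩ := exists_pow_lt_of_lt_one hε (by norm_num : (1:ℝ)/2 < 1)
    refine ⟨n, ?_⟩
    have h2 : (2:ℝ) ^ (-(n:ℤ)) = (1/2 : ℝ)^n := by
      rw [zpow_neg, zpow_natCast, one_div, inv_pow]
    rw [h2]; exact hn
  obtain ⟨m, hm⟩ := key hEmono hEexh M s hτs hcomm n
  refine ⟨(2:ℝ) ^ (-(m:ℤ)), by positivity, fun x hx => ?_⟩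
  have hxps : Pseudo E τ m x := by
    intro i α g hg
    exact agree_of_stdMetric_lt hE0 hEmono hEexh (hx i α) g hg
  obtain ⟨y, hy⟩ := hm x hxps
  refine ⟨y, fun α => ?_⟩
  refine stdMetric_lt_of_agree hEmono hEexh (fun g hg => ?_) hε hn
  exact congrFun (hy α) ⟨g, hg⟩
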